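/- Let r_1 < r_2 be positive integers and α ≥ 1 an integer. Let C be a linear [n,k,d]_q code with k > α(r_2 − r_1) in which every coordinate has locality r_2, and suppose there exist α pairwise disjoint sets R_1,…,R_α ⊆ {1,…,n}, each of size r_2 + 1, such that for each i there are coefficients λ_j ∈ F_q\{0} (j ∈ R_i) with Σ_{j∈R_i} λ_j c_j = 0 for every c ∈ C. Then there exists a linear code C' over F_q of length n − α(r_2 − r_1), dimension at least k − α(r_2 − r_1), and minimum Hamming distance at least d, whose coordinates admit a partition into a set of α(r_1+1) coordinates each having locality r_1 and a set of n − α(r_2+1) coordinates each having locality r_2. Moreover, if k = t'·r_2 + k_opt^{(q)}(n − t'(r_2+1), d) for some integer t' ≥ α and dim C' = k − α(r_2 − r_1), then dim C' = α r_1 + (t'−α) r_2 + k_opt^{(q)}((n − α(r_2−r_1)) − α(r_1+1) − (t'−α)(r_2+1), d). -/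

import Mathlib

open Finset

/-- `C` is a linear `[n,k,d]_q` code over `F`: it has `F`-dimension `k` and its minimum
Hamming distance (least Hamming weight of a nonzero codeword) equals `d`. -/
def IsLinearCode (F : Type*) [Field F] [DecidableEq F] {n : ℕ}
    (C : Submodule F (Fin n → F)) (k d : ℕ) : Prop :=
  Module.finrank F C = k ∧
    (∀ c ∈ C, c ≠ 0 → d ≤ hammingNorm c) ∧
    ∃ c ∈ C, c ≠ 0 ∧ hammingNorm c = d

/-- Coordinate `i` of the code `C` has locality `r`. -/
def HasLocality (F : Type*) [Field F] {n : ℕ} (C : Submodule F (Fin n → F))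
    (i : Fin n) (r : ℕ) : Prop :=
  ∃ R : Finset (Fin n), i ∉ R ∧ R.card ≤ r ∧
    ∃ lam : Fin n → F, ∀ c ∈ C, c i = ∑ j ∈ R, lam j * c j

/-- Coordinate `i` of the code `C` has locality `r` with a repair set contained in `S`. -/
def HasLocalityIn (F : Type*) [Field F] {n : ℕ} (C : Submodule F (Fin n → F))
    (i : Fin n) (r : ℕ) (S : Finset (Fin n)) : Prop :=
  ∃ R : Finset (Fin n), R ⊆ S ∧ i ∉ R ∧ R.card ≤ r ∧
    ∃ lam : Fin n → F, ∀ c ∈ C, c i = ∑ j ∈ R, lam j * c j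

/-- `H(I)`: the `F`-dimension of the image of `C` under the coordinate projection onto `I`. -/
noncomputable def projDim (F : Type*) [Field F] {n : ℕ}
    (C : Submodule F (Fin n → F)) (I : Finset (Fin n)) : ℕ :=
  Module.finrank F (C.map (LinearMap.funLeft F F (fun i : {x // x ∈ I} => (i : Fin n))))

/-- `k_opt^{(q)}(n,d)`: the largest dimension of a linear code of length `n` over `F`
with minimum Hamming distance at least `d`. -/
noncomputable def kopt (F : Type*) [Field F] [DecidableEq F] (n d : ℕ) : ℕ :=
  sSup {k | ∃ C : Submodule F (Fin n → F), Module.finrank F C = k ∧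
    ∀ c ∈ C, c ≠ 0 → d ≤ hammingNorm c}

/-!
Shorten `C` on a set `D` made of `r₂ - r₁` coordinates from each `Rs i`: keep the codewords
vanishing on `D` and delete those coordinates. This loses at most `#D` dimensions and no
distance. The parity check on `Rs i` survives on its `r₁ + 1` remaining coordinates, so each of
them is repaired by the other `r₁`, while every other coordinate keeps its repair set minus `D`.
-/

theorem Finset.exists_card_inter_eq_of_pairwiseDisjoint {ι κ : Type*} [DecidableEq κ]
    {I : Finset ι} {s : ι → Finset κ} (hs : (I : Set ι).PairwiseDisjoint s) {m : ℕ}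
    (hm : ∀ i ∈ I, m ≤ #(s i)) : ∃ D : Finset κ, #D = #I * m ∧ ∀ i ∈ I, #(D ∩ s i) = m := by
  choose T hTs hTcard using fun i => exists_subset_card_eq (min_le_right m #(s i))
  have hTm : ∀ i ∈ I, #(T i) = m := fun i hi => (hTcard i).trans (min_eq_left (hm i hi))
  have hT : (I : Set ι).PairwiseDisjoint T := hs.mono hTs
  refine ⟨I.biUnion T, by rw [card_biUnion hT, sum_const_nat hTm, mul_comm], fun i hi => ?_⟩
  suffices I.biUnion T ∩ s i = T i by rw [this, hTm i hi]
  ext j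
  simp only [mem_inter, mem_biUnion]
  constructor
  · rintro ⟨⟨i', hi', hj⟩, hji⟩
    obtain rfl : i' = i := by
      by_contra hne
      exact disjoint_left.1 (hs hi' hi hne) (hTs i' hj) hji
    exact hj
  · exact fun hj => ⟨⟨i, hi, hj⟩, hTs i hj⟩

theorem Finset.exists_injective_card_preimage_eq_card_sdiff {n ℓ : ℕ} (D : Finset (Fin n))
    (hD : #D = ℓ) : ∃ e : Fin (n - ℓ) → Fin n, ∃ he : Function.Injective e,
      ∀ R : Finset (Fin n), #(R.preimage e he.injOn) = #(R \ D) := by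
  classical
  let e := Dᶜ.orderEmbOfFin (by rw [card_compl, Fintype.card_fin, hD])
  refine ⟨e, e.injective, fun R => ?_⟩
  rw [card_preimage]
  congr 1
  ext j
  simp [e, range_orderEmbOfFin]

open Function

theorem Submodule.finrank_le_finrank_inf_ker_add {F V W : Type*} [Field F] [AddCommGroup V]
    [Module F V] [AddCommGroup W] [Module F W] [FiniteDimensional F V] [FiniteDimensional F W]
    (C : Submodule F V) (f : V →ₗ[F] W) :
    Module.finrank F C ≤ Module.finrank F ↥(C ⊓ LinearMap.ker f) + Module.finrank F W := by
  have h₁ := Submodule.finrank_sup_add_finrank_inf_eq C (LinearMap.ker f)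
  have h₂ := f.finrank_range_add_finrank_ker
  have h₃ := Submodule.finrank_le (C ⊔ LinearMap.ker f)
  have h₄ := Submodule.finrank_le (LinearMap.range f)
  omega

namespace LinearCode

variable {F : Type*} [Field F] {ι κ : Type*}

def vanishingOutside (F : Type*) [Field F] (e : ι → κ) : Submodule F (κ → F) :=
  LinearMap.ker (LinearMap.funLeft F F ((↑) : ↥(Set.range e)ᶜ → κ))

theorem mem_vanishingOutside {e : ι → κ} {c : κ → F} :
    c ∈ vanishingOutside F e ↔ ∀ j ∉ Set.range e, c j = 0 := by
  simp [vanishingOutside, funext_iff, LinearMap.funLeft_apply]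

def shorten (C : Submodule F (κ → F)) (e : ι → κ) : Submodule F (ι → F) :=
  (C ⊓ vanishingOutside F e).map (LinearMap.funLeft F F e)

theorem mem_shorten {C : Submodule F (κ → F)} {e : ι → κ} {c' : ι → F} :
    c' ∈ shorten C e ↔ ∃ c ∈ C, (∀ j ∉ Set.range e, c j = 0) ∧ c ∘ e = c' := by
  simp only [shorten, Submodule.mem_map, Submodule.mem_inf, mem_vanishingOutside, and_assoc]
  rfl

theorem finrank_le_finrank_shorten_add [Fintype ι] [Fintype κ] (C : Submodule F (κ → F))
    {e : ι → κ} (he : Injective e) :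
    Module.finrank F C ≤ Module.finrank F (shorten C e) + (Fintype.card κ - Fintype.card ι) := by
  classical
  have hinj : Injective ((LinearMap.funLeft F F e).domRestrict (C ⊓ vanishingOutside F e)) := by
    rw [← LinearMap.ker_eq_bot, LinearMap.ker_eq_bot']
    rintro ⟨c, hc⟩ h
    ext j
    by_cases hj : j ∈ Set.range e
    · obtain ⟨y, rfl⟩ := hj
      exact congrFun h y
    · exact mem_vanishingOutside.1 hc.2 j hj
  have hdim : Module.finrank F (shorten C e) = Module.finrank F ↥(C ⊓ vanishingOutside F e) := by
    rw [shorten, ← LinearMap.range_domRestrict, LinearMap.finrank_range_of_inj hinj]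
  have hcompl : Fintype.card ↥(Set.range e)ᶜ = Fintype.card κ - Fintype.card ι := by
    rw [Fintype.card_compl_set, Set.card_range_of_injective he]
  have := Submodule.finrank_le_finrank_inf_ker_add C
    (LinearMap.funLeft F F ((↑) : ↥(Set.range e)ᶜ → κ))
  rw [Module.finrank_fintype_fun_eq_card, hcompl] at this
  rw [hdim]
  exact this

theorem hammingNorm_comp_of_vanishing [Fintype ι] [Fintype κ] [DecidableEq F] {e : ι → κ}
    (he : Injective e) {c : κ → F} (hc : ∀ j ∉ Set.range e, c j = 0) :
    hammingNorm (c ∘ e) = hammingNorm c := by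
  refine Finset.card_nbij e (fun y hy => by simpa using hy) he.injOn fun j hj => ?_
  have hj : c j ≠ 0 := by simpa using hj
  obtain ⟨y, rfl⟩ : j ∈ Set.range e := of_not_not fun h => hj (hc j h)
  exact ⟨y, by simpa using hj, rfl⟩

theorem le_hammingNorm_of_mem_shorten [Fintype ι] [Fintype κ] [DecidableEq F]
    {C : Submodule F (κ → F)} {d : ℕ} (hd : ∀ c ∈ C, c ≠ 0 → d ≤ hammingNorm c)
    {e : ι → κ} (he : Injective e) :
    ∀ c' ∈ shorten C e, c' ≠ 0 → d ≤ hammingNorm c' := by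
  rintro _ hc' hne
  obtain ⟨c, hcC, hc, rfl⟩ := mem_shorten.1 hc'
  rw [hammingNorm_comp_of_vanishing he hc]
  exact hd c hcC (by rintro rfl; exact hne rfl)

theorem sum_preimage_mul_of_vanishing {e : ι → κ} (he : Injective e) {c : κ → F}
    (hc : ∀ j ∉ Set.range e, c j = 0) (R : Finset κ) (lam : κ → F) :
    ∑ y ∈ R.preimage e he.injOn, lam (e y) * c (e y) = ∑ j ∈ R, lam j * c j :=
  Finset.sum_preimage e R he.injOn (fun j => lam j * c j) fun j _ hj => by simp [hc j hj]

end LinearCode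

section Locality

open LinearCode

variable {F : Type*} [Field F] {m n : ℕ}

theorem HasLocality.shorten {C : Submodule F (Fin n → F)} {e : Fin m → Fin n}
    (he : Injective e) {x : Fin m} {r : ℕ} (h : HasLocality F C (e x) r) :
    HasLocality F (LinearCode.shorten C e) x r := by
  obtain ⟨R, hxR, hRr, lam, hrep⟩ := h
  refine ⟨R.preimage e he.injOn, by simpa using hxR, ?_, fun y => lam (e y), ?_⟩
  · exact (Finset.card_le_card_of_injOn e (fun y hy => Finset.mem_preimage.1 hy)
      he.injOn).trans hRr
  · intro _ hc'
    obtain ⟨c, hcC, hc, rfl⟩ := mem_shorten.1 hc'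
    exact (hrep c hcC).trans (sum_preimage_mul_of_vanishing he hc R lam).symm

theorem hasLocality_of_parityCheck {C : Submodule F (Fin n → F)} {R : Finset (Fin n)}
    {lam : Fin n → F} (hcheck : ∀ c ∈ C, ∑ j ∈ R, lam j * c j = 0) {i : Fin n} (hi : i ∈ R)
    (hlam : lam i ≠ 0) : HasLocality F C i (R.card - 1) := by
  refine ⟨R.erase i, Finset.notMem_erase i R, (Finset.card_erase_of_mem hi).le,
    fun j => -lam j / lam i, fun c hc => ?_⟩
  have hsplit := Finset.add_sum_erase R (fun j => lam j * c j) hi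
  rw [hcheck c hc] at hsplit
  simp only [div_mul_eq_mul_div, neg_mul, ← Finset.sum_div, Finset.sum_neg_distrib,
    eq_neg_of_add_eq_zero_right hsplit]
  field_simp

theorem hasLocality_shorten_of_parityCheck {C : Submodule F (Fin n → F)} {R : Finset (Fin n)}
    {lam : Fin n → F} (hcheck : ∀ c ∈ C, ∑ j ∈ R, lam j * c j = 0) {e : Fin m → Fin n}
    (he : Injective e) {x : Fin m} (hx : e x ∈ R) (hlam : lam (e x) ≠ 0) :
    HasLocality F (LinearCode.shorten C e) x ((R.preimage e he.injOn).card - 1) := by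
  refine hasLocality_of_parityCheck (lam := fun y => lam (e y)) ?_ (by simpa using hx) hlam
  intro _ hc'
  obtain ⟨c, hcC, hc, rfl⟩ := mem_shorten.1 hc'
  exact (sum_preimage_mul_of_vanishing he hc R lam).trans (hcheck c hcC)

theorem exists_partition_hasLocality_shorten {C : Submodule F (Fin n → F)} {e : Fin m → Fin n}
    (he : Injective e) {ι : Type*} {I : Finset ι} {Rs : ι → Finset (Fin n)} {r₁ r : ℕ}
    (hRs : (I : Set ι).PairwiseDisjoint Rs)
    (hpre : ∀ i ∈ I, #((Rs i).preimage e he.injOn) = r₁ + 1)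
    (hcheck : ∀ i ∈ I, ∃ lam : Fin n → F, (∀ j ∈ Rs i, lam j ≠ 0) ∧
      ∀ c ∈ C, ∑ j ∈ Rs i, lam j * c j = 0)
    (hloc : ∀ j, HasLocality F C j r) :
    ∃ A B : Finset (Fin m), Disjoint A B ∧ A ∪ B = univ ∧
      #A = #I * (r₁ + 1) ∧ #B = m - #I * (r₁ + 1) ∧
      (∀ x ∈ A, HasLocality F (LinearCode.shorten C e) x r₁) ∧
      (∀ x ∈ B, HasLocality F (LinearCode.shorten C e) x r) := by
  set A := I.biUnion fun i => (Rs i).preimage e he.injOn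
  have hA : #A = #I * (r₁ + 1) := by
    rw [card_biUnion fun i hi j hj hij => disjoint_preimage (hRs hi hj hij),
      sum_const_nat hpre]
  refine ⟨A, Aᶜ, disjoint_compl_right, union_compl A, hA,
    by rw [card_compl, Fintype.card_fin, hA], fun x hx => ?_, fun x _ => (hloc (e x)).shorten he⟩
  obtain ⟨i, hi, hxi⟩ := mem_biUnion.1 hx
  obtain ⟨lam, hlam, hcheck⟩ := hcheck i hi
  have hxi : e x ∈ Rs i := mem_preimage.1 hxi
  simpa [hpre i hi] using hasLocality_shorten_of_parityCheck hcheck he hxi (hlam _ hxi)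

end Locality

theorem stmt15_general {F : Type*} [Field F] [DecidableEq F] {n k d r₁ r₂ α : ℕ}
    (hr : r₁ < r₂)
    (C : Submodule F (Fin n → F)) (hC : IsLinearCode F C k d)
    (hloc : ∀ i : Fin n, HasLocality F C i r₂)
    (Rs : ℕ → Finset (Fin n))
    (hRdisj : ∀ i j, i < j → j < α → Disjoint (Rs i) (Rs j))
    (hRcard : ∀ i < α, (Rs i).card = r₂ + 1)
    (hRzero : ∀ i < α, ∃ lam : Fin n → F, (∀ j ∈ Rs i, lam j ≠ 0) ∧
      ∀ c ∈ C, ∑ j ∈ Rs i, lam j * c j = 0) :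
    ∃ C' : Submodule F (Fin (n - α * (r₂ - r₁)) → F),
      (k - α * (r₂ - r₁) ≤ Module.finrank F C') ∧
      (∀ c ∈ C', c ≠ 0 → d ≤ hammingNorm c) ∧
      (∃ A B : Finset (Fin (n - α * (r₂ - r₁))), Disjoint A B ∧ A ∪ B = Finset.univ ∧
        A.card = α * (r₁ + 1) ∧ B.card = n - α * (r₂ + 1) ∧
        (∀ x ∈ A, HasLocality F C' x r₁) ∧
        (∀ x ∈ B, HasLocality F C' x r₂)) ∧
      (∀ t' : ℕ, α ≤ t' → k = t' * r₂ + kopt F (n - t' * (r₂ + 1)) d →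
        Module.finrank F C' = k - α * (r₂ - r₁) →
        Module.finrank F C' = α * r₁ + (t' - α) * r₂ +
          kopt F ((n - α * (r₂ - r₁)) - α * (r₁ + 1) - (t' - α) * (r₂ + 1)) d) := by
  have hRs : ((range α : Finset ℕ) : Set ℕ).PairwiseDisjoint Rs := by
    intro i hi j hj hij
    rcases hij.lt_or_gt with h | h
    · exact hRdisj i j h (by simpa using hj)
    · exact (hRdisj j i h (by simpa using hi)).symm
  obtain ⟨D, hDcard, hDRs⟩ := exists_card_inter_eq_of_pairwiseDisjoint hRs (m := r₂ - r₁)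
    fun i hi => by rw [hRcard i (by simpa using hi)]; omega
  rw [card_range] at hDcard
  obtain ⟨e, he, hpre⟩ := exists_injective_card_preimage_eq_card_sdiff D hDcard
  obtain ⟨A, B, hAB, hABu, hA, hB, hlocA, hlocB⟩ :=
    exists_partition_hasLocality_shorten (r₁ := r₁) he hRs (fun i hi => by
      rw [hpre, card_sdiff, hDRs i hi, hRcard i (by simpa using hi)]; omega)
      (fun i hi => hRzero i (by simpa using hi)) hloc
  rw [card_range] at hA hB
  have hα : α * (r₂ - r₁) + α * (r₁ + 1) = α * (r₂ + 1) := by rw [← mul_add]; congr 1; omega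
  refine ⟨LinearCode.shorten C e, ?_, LinearCode.le_hammingNorm_of_mem_shorten hC.2.1 he,
    ⟨A, B, hAB, hABu, hA, by rw [hB, Nat.sub_sub, hα], hlocA, hlocB⟩, ?_⟩
  · have := LinearCode.finrank_le_finrank_shorten_add C he
    simp only [Fintype.card_fin, hC.1] at this
    omega
  · intro t' ht' hk hdim
    have hlen : n - α * (r₂ - r₁) - α * (r₁ + 1) - (t' - α) * (r₂ + 1) = n - t' * (r₂ + 1) := by
      rw [Nat.sub_sub n, hα, Nat.sub_sub, ← add_mul, Nat.add_sub_cancel' ht']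
    have hr₂ : t' * r₂ = α * r₁ + (t' - α) * r₂ + α * (r₂ - r₁) := by
      rw [add_right_comm, ← mul_add, Nat.add_sub_cancel' hr.le, ← add_mul,
        Nat.add_sub_cancel' ht']
    rw [hdim, hlen, hk]
    omega

theorem stmt15 {F : Type*} [Field F] [Fintype F] [DecidableEq F] {n k d r₁ r₂ α : ℕ}
    (hr₁ : 0 < r₁) (hr : r₁ < r₂) (hα : 1 ≤ α) (hk : α * (r₂ - r₁) < k)
    (C : Submodule F (Fin n → F)) (hC : IsLinearCode F C k d)
    (hloc : ∀ i : Fin n, HasLocality F C i r₂)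
    (Rs : ℕ → Finset (Fin n))
    (hRdisj : ∀ i j, i < j → j < α → Disjoint (Rs i) (Rs j))
    (hRcard : ∀ i < α, (Rs i).card = r₂ + 1)
    (hRzero : ∀ i < α, ∃ lam : Fin n → F, (∀ j ∈ Rs i, lam j ≠ 0) ∧
      ∀ c ∈ C, ∑ j ∈ Rs i, lam j * c j = 0) :
    ∃ C' : Submodule F (Fin (n - α * (r₂ - r₁)) → F),
      (k - α * (r₂ - r₁) ≤ Module.finrank F C') ∧
      (∀ c ∈ C', c ≠ 0 → d ≤ hammingNorm c) ∧
      (∃ A B : Finset (Fin (n - α * (r₂ - r₁))), Disjoint A B ∧ A ∪ B = Finset.univ ∧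
        A.card = α * (r₁ + 1) ∧ B.card = n - α * (r₂ + 1) ∧
        (∀ x ∈ A, HasLocality F C' x r₁) ∧
        (∀ x ∈ B, HasLocality F C' x r₂)) ∧
      (∀ t' : ℕ, α ≤ t' → k = t' * r₂ + kopt F (n - t' * (r₂ + 1)) d →
        Module.finrank F C' = k - α * (r₂ - r₁) →
        Module.finrank F C' = α * r₁ + (t' - α) * r₂ +
          kopt F ((n - α * (r₂ - r₁)) - α * (r₁ + 1) - (t' - α) * (r₂ + 1)) d) :=
  stmt15_general hr C hC hloc Rs hRdisj hRcard hRzero
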